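/- Fix an integer d with 2 ≤ d ≤ 7. Then there exists c_d ∈ (c_g, 1] such that for every c ∈ [0, c_d): (i) the maps x ↦ i(c, x) and x ↦ j(c, x) each have a unique fixed point in (0,1), denoted a_c and b_c respectively; (ii) both maps are differentiable in x on [0,1] and their derivatives there have absolute value strictly less than 1; (iii) for every x₀ ∈ [0,1], the iterates of x ↦ i(c, x) starting from x₀ converge to a_c, and the iterates of x ↦ j(c, x) starting from x₀ converge to b_c; (iv) for every x ∈ [0,1], i(c, x) > x if and only if x < a_c, and j(c, x) > x if and only if x < b_c. -/

import Mathlib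

/-!
Both maps have the form `x ↦ f(β, f(α, x))` with `α, β ∈ [1, 1 + c]`. Writing
`u = (1 + α x) / (1 + 2 x) ∈ [2/3, 1]`, the chain rule bounds the derivative on `[0, 1]` by
`((1 + β) / 2) ^ (d - 1)` times a ratio of two polynomials in `u` that are monotone on `[1/2, ∞)`.
For `2 ≤ d ≤ 7` and `c < c_d := 2 / 2 ^ d`, a check on a uniform grid bounds this by some `K < 1`,
so both maps are `K`-contractions of `[0, 1]` into `(0, 1)`. Banach's theorem gives the unique
attracting fixed point `a`, and `x < F x ↔ x < a` follows from `|F x - a| ≤ K |x - a|`.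
Finally `c_g = ρ(c_g) ^ d ≤ ρ(c_g) ^ 2` with `ρ(x) = (1 + x + x²) / (2 + x) ≤ 1` forces `c_g < 1/2`,
and two steps of the monotone map `g(1, ·)` from `1/2` push the bound below `2 / 2 ^ d`.
-/

open Filter Topology

noncomputable def fMap (d : ℕ) (α x : ℝ) : ℝ := ((1 + α * x) / (1 + 2 * x)) ^ d

noncomputable def gMap (d : ℕ) (b x : ℝ) : ℝ :=
  b ^ d * ((1 + x + x ^ 2) / (1 + b + b * x)) ^ d

/-- `i(c,x) = f(1, f(1+c, x))`. -/
noncomputable def iMap (d : ℕ) (c x : ℝ) : ℝ := fMap d 1 (fMap d (1 + c) x)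

/-- `j(c,x) = f(1+c, f(1, x))`. -/
noncomputable def jMap (d : ℕ) (c x : ℝ) : ℝ := fMap d (1 + c) (fMap d 1 x)

open Set Function
open scoped NNReal

section Contraction

variable {X : Type*} [MetricSpace X] {F : X → X} {K : ℝ≥0} {s : Set X}

lemma LipschitzOnWith.eq_of_isFixedPt (hF : LipschitzOnWith K F s) (hK : K < 1) {a b : X}
    (ha : a ∈ s) (hb : b ∈ s) (hFa : IsFixedPt F a) (hFb : IsFixedPt F b) : a = b := by
  have h := hF.dist_le_mul a ha b hb
  rw [hFa.eq, hFb.eq] at h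
  have hK' : (K : ℝ) < 1 := hK
  exact dist_le_zero.1 (by nlinarith [dist_nonneg (x := a) (y := b)])

lemma LipschitzOnWith.exists_isFixedPt_tendsto_iterate (hF : LipschitzOnWith K F s) (hK : K < 1)
    (hs : IsComplete s) (hmaps : MapsTo F s s) {x₀ : X} (hx₀ : x₀ ∈ s) :
    ∃ a ∈ s, IsFixedPt F a ∧ ∀ x ∈ s, Tendsto (fun n => F^[n] x) atTop (𝓝 a) := by
  have hc : ContractingWith K (hmaps.restrict F s s) := ⟨hK, hF.mapsToRestrict hmaps⟩
  obtain ⟨a, ha, hFa, -⟩ := hc.exists_fixedPoint' hs hmaps hx₀ (edist_ne_top _ _)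
  refine ⟨a, ha, hFa, fun x hx => ?_⟩
  obtain ⟨b, hb, hFb, htend, -⟩ := hc.exists_fixedPoint' hs hmaps hx (edist_ne_top _ _)
  rwa [hF.eq_of_isFixedPt hK ha hb hFa hFb]

end Contraction

lemma LipschitzOnWith.lt_apply_iff_lt_of_isFixedPt {F : ℝ → ℝ} {K : ℝ≥0} {s : Set ℝ}
    (hF : LipschitzOnWith K F s) (hK : K < 1) {a x : ℝ} (ha : a ∈ s) (hx : x ∈ s)
    (hFa : IsFixedPt F a) : x < F x ↔ x < a := by
  have h := hF.dist_le_mul x hx a ha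
  rw [hFa.eq, Real.dist_eq, Real.dist_eq] at h
  have hK' : (K : ℝ) < 1 := hK
  constructor
  · intro hlt
    by_contra! hge
    rw [abs_of_nonneg (sub_nonneg.2 hge)] at h
    nlinarith [le_abs_self (F x - a)]
  · intro hlt
    rw [abs_of_neg (sub_neg.2 hlt)] at h
    nlinarith [neg_abs_le (F x - a)]

structure IsUnitIntervalAttractor (F : ℝ → ℝ) (a : ℝ) : Prop where
  mem : a ∈ Ioo (0 : ℝ) 1
  isFixedPt : IsFixedPt F a
  unique : ∀ y ∈ Ioo (0 : ℝ) 1, IsFixedPt F y → y = a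
  abs_deriv_lt : ∀ x ∈ Icc (0 : ℝ) 1, DifferentiableAt ℝ F x ∧ |deriv F x| < 1
  tendsto : ∀ x₀ ∈ Icc (0 : ℝ) 1, Tendsto (fun k => F^[k] x₀) atTop (𝓝 a)
  lt_apply_iff : ∀ x ∈ Icc (0 : ℝ) 1, x < F x ↔ x < a

lemma exists_isUnitIntervalAttractor_of_abs_deriv_le {F : ℝ → ℝ} {K : ℝ≥0} (hK : K < 1)
    (hmaps : MapsTo F (Icc 0 1) (Ioo 0 1))
    (hder : ∀ x ∈ Icc (0 : ℝ) 1, ∃ D, HasDerivAt F D x ∧ |D| ≤ K) :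
    ∃ a, IsUnitIntervalAttractor F a := by
  choose! F' hF' hF'K using hder
  have hlip : LipschitzOnWith K F (Icc 0 1) :=
    (convex_Icc 0 1).lipschitzOnWith_of_nnnorm_hasDerivWithin_le
      (fun x hx => (hF' x hx).hasDerivWithinAt) fun x hx => by
        rw [← NNReal.coe_le_coe, coe_nnnorm, Real.norm_eq_abs]; exact hF'K x hx
  obtain ⟨a, ha, hFa, htend⟩ := hlip.exists_isFixedPt_tendsto_iterate hK isClosed_Icc.isComplete
    (hmaps.mono_right Ioo_subset_Icc_self) (left_mem_Icc.2 zero_le_one)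
  refine ⟨a, hFa.eq ▸ hmaps ha, hFa, fun y hy hFy => ?_, fun x hx => ?_, htend,
    fun x hx => hlip.lt_apply_iff_lt_of_isFixedPt hK ha hx hFa⟩
  · exact hlip.eq_of_isFixedPt hK (Ioo_subset_Icc_self hy) ha hFy hFa
  · rw [(hF' x hx).deriv]
    exact ⟨(hF' x hx).differentiableAt, (hF'K x hx).trans_lt hK⟩

lemma le_mul_of_grid {N D : ℝ → ℝ} {a h K : ℝ} {n : ℕ} (hn : 0 < n) (hh : 0 ≤ h) (hK : 0 ≤ K)
    (hN : MonotoneOn N (Ici a)) (hD : MonotoneOn D (Ici a))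
    (hgrid : ∀ k < n, N (a + (k + 1) * h) ≤ K * D (a + k * h)) :
    ∀ u ∈ Icc a (a + n * h), N u ≤ K * D u := by
  induction n with
  | zero => exact absurd hn (lt_irrefl 0)
  | succ n ih =>
    rintro u ⟨hau, hu⟩
    push_cast at hu
    obtain hlt | hge := lt_or_ge u (a + n * h)
    · have hn : 0 < n := Nat.pos_of_ne_zero fun h0 => by simp [h0] at hlt; linarith
      exact ih hn (fun k hk => hgrid k (by omega)) u ⟨hau, hlt.le⟩
    · have hna : a ≤ a + n * h := le_add_of_nonneg_right (by positivity)
      calc N u ≤ N (a + (n + 1) * h) := hN hau (hau.trans hu) hu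
        _ ≤ K * D (a + n * h) := hgrid n n.lt_succ_self
        _ ≤ K * D u := mul_le_mul_of_nonneg_left (hD hna hau hge) hK

lemma exists_lt_one_le_mul_of_grid {N D : ℝ → ℝ} {a h : ℝ} {n : ℕ} (hn : 0 < n) (hh : 0 ≤ h)
    (hN : MonotoneOn N (Ici a)) (hD : MonotoneOn D (Ici a)) (hD0 : ∀ k < n, 0 < D (a + k * h))
    (hgrid : ∀ k < n, N (a + (k + 1) * h) < D (a + k * h)) :
    ∃ K : ℝ≥0, K < 1 ∧ ∀ u ∈ Icc a (a + n * h), N u ≤ K * D u := by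
  have hne : (Finset.range n).Nonempty := Finset.nonempty_range_iff.2 hn.ne'
  set r : ℕ → ℝ := fun k => N (a + (k + 1) * h) / D (a + k * h)
  refine ⟨((Finset.range n).sup' hne r).toNNReal, ?_, le_mul_of_grid hn hh NNReal.zero_le_coe hN hD
    fun k hk => ?_⟩
  · rw [Real.toNNReal_lt_one, Finset.sup'_lt_iff]
    intro k hk
    rw [Finset.mem_range] at hk
    exact (div_lt_one (hD0 k hk)).2 (hgrid k hk)
  · rw [← div_le_iff₀ (hD0 k hk)]
    exact (Finset.le_sup' r (Finset.mem_range.2 hk)).trans (Real.le_coe_toNNReal _)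

-- For `u = (1 + α x) / (1 + 2 x)`, the chain rule bounds `|∂ₓ f(β, f(α, x))|` by
-- `((1 + β) / 2) ^ (d - 1) * slopeNum d u / slopeDen d u`.
def slopeNum {R : Type*} [CommRing R] (d : ℕ) (u : R) : R :=
  d ^ 2 * (2 * u - 1) ^ 2 * u ^ (d - 1) * (1 + u ^ d) ^ (d - 1)

def slopeDen {R : Type*} [CommRing R] (d : ℕ) (u : R) : R := (1 + 2 * u ^ d) ^ (d + 1)

@[simp, norm_cast]
lemma Rat.cast_slopeNum {R : Type*} [Field R] [CharZero R] (d : ℕ) (q : ℚ) :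
    ((slopeNum d q : ℚ) : R) = slopeNum d (q : R) := by
  simp [slopeNum]

@[simp, norm_cast]
lemma Rat.cast_slopeDen {R : Type*} [Field R] [CharZero R] (d : ℕ) (q : ℚ) :
    ((slopeDen d q : ℚ) : R) = slopeDen d (q : R) := by
  simp [slopeDen]

lemma slopeNum_monotoneOn (d : ℕ) : MonotoneOn (slopeNum d : ℝ → ℝ) (Ici (1 / 2)) := by
  intro u hu v hv huv
  simp only [mem_Ici] at hu hv
  have : 0 ≤ 2 * u - 1 := by linarith
  have : 0 ≤ u := by linarith
  have : 0 ≤ v := by linarith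
  unfold slopeNum
  gcongr

lemma slopeDen_monotoneOn (d : ℕ) : MonotoneOn (slopeDen d : ℝ → ℝ) (Ici 0) := by
  intro u hu v hv huv
  simp only [mem_Ici] at hu hv
  unfold slopeDen
  gcongr

lemma slopeDen_pos (d : ℕ) {u : ℝ} (hu : 0 ≤ u) : 0 < slopeDen d u := by
  unfold slopeDen
  positivity

-- `240` steps of width `1 / 720` cover `[2/3, 1]`; `d = 7` needs at least `217` of them.
lemma slopeNum_mul_lt_slopeDen_on_grid : ∀ d ∈ Finset.Icc 2 7, ∀ k : ℕ, k < 240 →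
    (1 + 1 / 2 ^ d : ℚ) ^ (d - 1) * slopeNum d (2 / 3 + (k + 1) * (1 / 720) : ℚ) <
      slopeDen d (2 / 3 + k * (1 / 720) : ℚ) := by
  decide +kernel

lemma exists_lt_one_slopeNum_le_mul_slopeDen {d : ℕ} (hd2 : 2 ≤ d) (hd7 : d ≤ 7) :
    ∃ K : ℝ≥0, K < 1 ∧ ∀ u ∈ Icc (2 / 3 : ℝ) 1,
      (1 + 1 / 2 ^ d) ^ (d - 1) * slopeNum d u ≤ K * slopeDen d u := by
  have hmono : Ici (2 / 3 : ℝ) ⊆ Ici (1 / 2) := Ici_subset_Ici.2 (by norm_num)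
  obtain ⟨K, hK1, hK⟩ := exists_lt_one_le_mul_of_grid (n := 240) (a := 2 / 3) (h := 1 / 720)
    (N := fun u => (1 + 1 / 2 ^ d) ^ (d - 1) * slopeNum d u) (D := slopeDen d)
    (by norm_num) (by norm_num)
    (fun u hu v hv huv => mul_le_mul_of_nonneg_left
      ((slopeNum_monotoneOn d).mono hmono hu hv huv) (by positivity))
    ((slopeDen_monotoneOn d).mono (hmono.trans (Ici_subset_Ici.2 (by norm_num))))
    (fun k _ => slopeDen_pos d (by positivity))
    fun k hk => by
      simpa using (Rat.cast_lt (K := ℝ)).2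
        (slopeNum_mul_lt_slopeDen_on_grid d (Finset.mem_Icc.2 ⟨hd2, hd7⟩) k hk)
  refine ⟨K, hK1, fun u hu => hK u ?_⟩
  rwa [show (2 / 3 : ℝ) + (240 : ℕ) * (1 / 720) = 1 by norm_num]

noncomputable def fMapDeriv (d : ℕ) (α x : ℝ) : ℝ :=
  d * ((1 + α * x) / (1 + 2 * x)) ^ (d - 1) * ((α - 2) / (1 + 2 * x) ^ 2)

lemma hasDerivAt_fMap (d : ℕ) (α : ℝ) {x : ℝ} (hx : 0 < 1 + 2 * x) :
    HasDerivAt (fMap d α) (fMapDeriv d α x) x := by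
  have h := ((((hasDerivAt_id' x).const_mul α).const_add 1).fun_div
    (((hasDerivAt_id' x).const_mul 2).const_add 1) hx.ne').fun_pow d
  exact h.congr_deriv (by unfold fMapDeriv; ring)

lemma fMap_pos (d : ℕ) {α x : ℝ} (hα : 0 ≤ α) (hx : 0 ≤ x) : 0 < fMap d α x := by
  unfold fMap
  positivity

lemma fMap_lt_one {d : ℕ} (hd : d ≠ 0) {α x : ℝ} (hα0 : 0 ≤ α) (hα : α < 2) (hx : 0 < x) :
    fMap d α x < 1 := by
  refine pow_lt_one₀ (by positivity) ?_ hd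
  rw [div_lt_one (by positivity)]
  nlinarith

lemma mapsTo_fMap_comp_fMap {d : ℕ} (hd : d ≠ 0) {α β : ℝ} (hα : 0 ≤ α) (hβ : β ∈ Ico 0 2) :
    MapsTo (fun x => fMap d β (fMap d α x)) (Icc 0 1) (Ioo 0 1) := fun _ hx =>
  have hy := fMap_pos d hα hx.1
  ⟨fMap_pos d hβ.1 hy.le, fMap_lt_one hd hβ.1 hβ.2 hy⟩

lemma abs_fMapDeriv_le_sq (d : ℕ) {α x : ℝ} (hα : α ∈ Icc 1 2) (hx : 0 ≤ x) :
    |fMapDeriv d α x| ≤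
      d * ((1 + α * x) / (1 + 2 * x)) ^ (d - 1) * (2 * ((1 + α * x) / (1 + 2 * x)) - 1) ^ 2 := by
  obtain ⟨hα1, hα2⟩ := hα
  have hx' : 0 < 1 + 2 * x := by linarith
  unfold fMapDeriv
  rw [abs_mul, abs_of_nonneg (by positivity)]
  gcongr
  -- `(2 u - 1) (1 + 2 x) = 1 + 2 (α - 1) x ≥ 1`
  rw [abs_div, abs_of_nonpos (by linarith), abs_of_pos (by positivity),
    show 2 * ((1 + α * x) / (1 + 2 * x)) - 1 = (1 + 2 * (α - 1) * x) / (1 + 2 * x) by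
      field_simp; ring, div_pow]
  gcongr
  nlinarith [mul_nonneg (sub_nonneg.2 hα1) hx]

lemma abs_fMapDeriv_le {d : ℕ} (hd : d ≠ 0) {α z : ℝ} (hα : α ∈ Icc 1 2) (hz : z ∈ Icc 0 1) :
    |fMapDeriv d α z| ≤
      ((1 + α) / 2) ^ (d - 1) * (d * (1 + z) ^ (d - 1) / (1 + 2 * z) ^ (d + 1)) := by
  obtain ⟨hα1, hα2⟩ := hα
  obtain ⟨hz0, hz1⟩ := hz
  have hz' : 0 < 1 + 2 * z := by linarith
  -- the difference of the numerators is `(α - 1) (1 - z) / 2`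
  have hs : (1 + α * z) / (1 + 2 * z) ≤ (1 + α) / 2 * ((1 + z) / (1 + 2 * z)) := by
    rw [← mul_div_assoc]
    gcongr
    nlinarith [mul_nonneg (sub_nonneg.2 hα1) (sub_nonneg.2 hz1)]
  calc |fMapDeriv d α z|
      = d * ((1 + α * z) / (1 + 2 * z)) ^ (d - 1) * ((2 - α) / (1 + 2 * z) ^ 2) := by
        unfold fMapDeriv
        rw [abs_mul, abs_of_nonneg (by positivity), abs_div, abs_of_nonpos (by linarith),
          abs_of_pos (by positivity), neg_sub]
    _ ≤ d * ((1 + α) / 2 * ((1 + z) / (1 + 2 * z))) ^ (d - 1) * (1 / (1 + 2 * z) ^ 2) := by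
        gcongr
        linarith
    _ = ((1 + α) / 2) ^ (d - 1) * (d * (1 + z) ^ (d - 1) / (1 + 2 * z) ^ (d + 1)) := by
        obtain ⟨e, rfl⟩ := Nat.exists_eq_add_one_of_ne_zero hd
        rw [Nat.add_sub_cancel, mul_pow, div_pow, div_pow]
        field_simp
        ring

lemma exists_hasDerivAt_fMap_comp_fMap_abs_le {d : ℕ} (hd : d ≠ 0) {α β K : ℝ}
    (hα : α ∈ Icc 1 2) (hβ : β ∈ Icc 1 2)
    (hK : ∀ u ∈ Icc (2 / 3 : ℝ) 1, ((1 + β) / 2) ^ (d - 1) * slopeNum d u ≤ K * slopeDen d u)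
    {x : ℝ} (hx : x ∈ Icc 0 1) :
    ∃ D, HasDerivAt (fun x => fMap d β (fMap d α x)) D x ∧ |D| ≤ K := by
  obtain ⟨hα1, hα2⟩ := hα
  obtain ⟨hx0, hx1⟩ := hx
  have hx' : 0 < 1 + 2 * x := by linarith
  set u := (1 + α * x) / (1 + 2 * x) with hu_def
  have hu : u ∈ Icc (2 / 3) 1 :=
    ⟨by rw [le_div_iff₀ hx']; nlinarith, by rw [div_le_one hx']; nlinarith⟩
  have hy : fMap d α x = u ^ d := rfl
  have hu0 : 0 ≤ u := by linarith [hu.1]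
  have hβ0 : 0 ≤ β := by linarith [hβ.1]
  have hy1 : u ^ d ∈ Icc 0 1 := ⟨by positivity, pow_le_one₀ hu0 hu.2⟩
  refine ⟨_, (hasDerivAt_fMap d β (by rw [hy]; linarith [hy1.1])).comp x
    (hasDerivAt_fMap d α hx'), ?_⟩
  rw [abs_mul, hy]
  calc |fMapDeriv d β (u ^ d)| * |fMapDeriv d α x|
      ≤ ((1 + β) / 2) ^ (d - 1) * (d * (1 + u ^ d) ^ (d - 1) / (1 + 2 * u ^ d) ^ (d + 1)) *
          (d * u ^ (d - 1) * (2 * u - 1) ^ 2) :=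
        mul_le_mul (abs_fMapDeriv_le hd hβ hy1) (abs_fMapDeriv_le_sq d ⟨hα1, hα2⟩ hx0)
          (abs_nonneg _) (by positivity)
    _ = ((1 + β) / 2) ^ (d - 1) * slopeNum d u / slopeDen d u := by
        unfold slopeNum slopeDen
        ring
    _ ≤ K := by
        rw [div_le_iff₀ (slopeDen_pos d (by linarith [hu.1]))]
        exact hK u hu

lemma two_div_two_pow_le_half {d : ℕ} (hd : 2 ≤ d) : (2 : ℝ) / 2 ^ d ≤ 1 / 2 := by
  rw [div_le_div_iff₀ (by positivity) two_pos]
  linarith [pow_le_pow_right₀ (one_le_two : (1 : ℝ) ≤ 2) hd]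

lemma exists_isUnitIntervalAttractor_fMap_comp_fMap {d : ℕ} (hd2 : 2 ≤ d) (hd7 : d ≤ 7)
    {α β : ℝ} (hα : α ∈ Icc 1 2) (hβ : β ∈ Icc 1 (1 + 2 / 2 ^ d)) :
    ∃ a, IsUnitIntervalAttractor (fun x => fMap d β (fMap d α x)) a := by
  obtain ⟨K, hK1, hK⟩ := exists_lt_one_slopeNum_le_mul_slopeDen hd2 hd7
  have hβ2 : β < 2 := by linarith [hβ.2, two_div_two_pow_le_half hd2]
  have hslope (u : ℝ) (hu : u ∈ Icc (2 / 3 : ℝ) 1) :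
      ((1 + β) / 2) ^ (d - 1) * slopeNum d u ≤ K * slopeDen d u := by
    refine le_trans ?_ (hK u hu)
    have hu0 : 0 ≤ u := by linarith [hu.1]
    have : 0 ≤ slopeNum d u := by unfold slopeNum; positivity
    have : (1 + β) / 2 ≤ 1 + 1 / 2 ^ d := by
      linarith [hβ.2, show (2 : ℝ) / 2 ^ d = 2 * (1 / 2 ^ d) by ring]
    gcongr
    linarith [hβ.1]
  exact exists_isUnitIntervalAttractor_of_abs_deriv_le hK1
    (mapsTo_fMap_comp_fMap (by omega) (by linarith [hα.1]) ⟨by linarith [hβ.1], hβ2⟩)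
    fun x hx => exists_hasDerivAt_fMap_comp_fMap_abs_le (by omega) hα ⟨hβ.1, hβ2.le⟩ hslope hx

lemma gMap_one_eq (d : ℕ) (x : ℝ) : gMap d 1 x = ((1 + x + x ^ 2) / (2 + x)) ^ d := by
  norm_num [gMap, one_add_one_eq_two]

lemma gMap_one_monotoneOn (d : ℕ) : MonotoneOn (gMap d 1) (Ici 0) := by
  intro x hx y hy hxy
  simp only [mem_Ici] at hx hy
  rw [gMap_one_eq, gMap_one_eq]
  gcongr ?_ ^ d
  rw [div_le_div_iff₀ (by positivity) (by positivity)]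
  nlinarith [mul_nonneg (sub_nonneg.2 hxy) (by positivity : (0 : ℝ) ≤ 1 + 2 * (x + y) + x * y)]

lemma lt_half_of_gMap_one_eq {d : ℕ} (hd : 2 ≤ d) {x : ℝ} (hx : x ∈ Ioo 0 1)
    (hfix : gMap d 1 x = x) : x < 1 / 2 := by
  obtain ⟨hx0, hx1⟩ := hx
  set ρ := (1 + x + x ^ 2) / (2 + x) with hρ
  have hρ1 : ρ ≤ 1 := by rw [div_le_one (by positivity)]; nlinarith
  have hle : x ≤ ρ ^ 2 := by
    rw [← hfix, gMap_one_eq]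
    exact pow_le_pow_of_le_one (by positivity) hρ1 hd
  -- `(1 + x + x²)² - x (2 + x)² = (x - 1) (x³ + 2x² + x - 1)`
  rw [hρ, div_pow, le_div_iff₀ (by positivity)] at hle
  nlinarith [mul_pos (sub_pos.2 hx1) hx0, mul_pos (mul_pos (sub_pos.2 hx1) hx0) hx0]

lemma lt_two_div_two_pow_of_gMap_one_eq {d : ℕ} (hd2 : 2 ≤ d) (hd7 : d ≤ 7) {x : ℝ}
    (hx : x ∈ Ioo 0 1) (hfix : gMap d 1 x = x) : x < 2 / 2 ^ d := by
  have hmono := gMap_one_monotoneOn d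
  have hx0 : x ∈ Ici 0 := hx.1.le
  have h1 : x ≤ gMap d 1 (1 / 2) :=
    hfix ▸ hmono hx0 (by norm_num) (lt_half_of_gMap_one_eq hd2 hx hfix).le
  calc x = gMap d 1 x := hfix.symm
    _ ≤ gMap d 1 (gMap d 1 (1 / 2)) := hmono hx0 (hx0.trans h1) (hfix ▸ h1)
    _ < 2 / 2 ^ d := by interval_cases d <;> norm_num [gMap]

theorem stmt_14 (d : ℕ) (hd2 : 2 ≤ d) (hd7 : d ≤ 7)
    (cg : ℝ) (hcg : cg ∈ Set.Ioo (0 : ℝ) 1) (hcgfix : gMap d 1 cg = cg) :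
    ∃ cd : ℝ, cg < cd ∧ cd ≤ 1 ∧
      ∀ c : ℝ, 0 ≤ c → c < cd →
        ∃ ac ∈ Set.Ioo (0 : ℝ) 1, ∃ bc ∈ Set.Ioo (0 : ℝ) 1,
          iMap d c ac = ac ∧ (∀ y ∈ Set.Ioo (0 : ℝ) 1, iMap d c y = y → y = ac) ∧
          jMap d c bc = bc ∧ (∀ y ∈ Set.Ioo (0 : ℝ) 1, jMap d c y = y → y = bc) ∧
          (∀ x ∈ Set.Icc (0 : ℝ) 1,
            DifferentiableAt ℝ (iMap d c) x ∧ |deriv (iMap d c) x| < 1 ∧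
            DifferentiableAt ℝ (jMap d c) x ∧ |deriv (jMap d c) x| < 1) ∧
          (∀ x₀ ∈ Set.Icc (0 : ℝ) 1,
            Tendsto (fun k => (iMap d c)^[k] x₀) atTop (𝓝 ac) ∧
            Tendsto (fun k => (jMap d c)^[k] x₀) atTop (𝓝 bc)) ∧
          (∀ x ∈ Set.Icc (0 : ℝ) 1,
            (x < iMap d c x ↔ x < ac) ∧ (x < jMap d c x ↔ x < bc)) := by
  have hcd := two_div_two_pow_le_half hd2
  refine ⟨2 / 2 ^ d, lt_two_div_two_pow_of_gMap_one_eq hd2 hd7 hcg hcgfix, by linarith,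
    fun c hc0 hc => ?_⟩
  obtain ⟨a, ha⟩ := exists_isUnitIntervalAttractor_fMap_comp_fMap hd2 hd7 (α := 1 + c) (β := 1)
    ⟨by linarith, by linarith⟩ ⟨le_rfl, le_add_of_nonneg_right (by positivity)⟩
  obtain ⟨b, hb⟩ := exists_isUnitIntervalAttractor_fMap_comp_fMap hd2 hd7 (α := 1) (β := 1 + c)
    ⟨le_rfl, one_le_two⟩ ⟨by linarith, by linarith⟩
  exact ⟨a, ha.mem, b, hb.mem, ha.isFixedPt, ha.unique, hb.isFixedPt, hb.unique,
    fun x hx => ⟨(ha.abs_deriv_lt x hx).1, (ha.abs_deriv_lt x hx).2, (hb.abs_deriv_lt x hx).1,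
      (hb.abs_deriv_lt x hx).2⟩,
    fun x hx => ⟨ha.tendsto x hx, hb.tendsto x hx⟩,
    fun x hx => ⟨ha.lt_apply_iff x hx, hb.lt_apply_iff x hx⟩⟩
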